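/- Let R ⊆ A^q be a submodule such that M = A^q/R is finitely generated as an A_d-module, with generating set {g₁,…,g_γ}, associated surjection ψ : A_d^γ → M, matrix of relations X(σ₁) ∈ A_d^{δ×γ}, companion matrices A₁(σ₁),…,A_{n−d}(σ₁) ∈ A_d^{γ×γ} each invertible over A_d, and output matrix C(σ₁) ∈ A_d^{q×γ}. Let f = Σ_{ν∈ℤⁿ} α_ν σ^ν ∈ A^q, where α_ν ∈ ℝ^{1×q} and only finitely many α_ν are nonzero. Then the following are equivalent: (1) f ∈ R; (2) the row vector Σ_{ν∈ℤⁿ} α_ν · (Π_{i=1}^{d} σ_i^{ν_i}) · C(σ₁) · Π_{j=1}^{n−d} A_j(σ₁)^{ν_{d+j}} ∈ A_d^γ lies in ker ψ; (3) there exists a matrix F(σ₁) ∈ A_d^{q×δ} such that Σ_{ν∈ℤⁿ} α_ν · (Π_{i=1}^{d} σ_i^{ν_i}) · C(σ₁) · Π_{j=1}^{n−d} A_j(σ₁)^{ν_{d+j}} = F(σ₁)·X(σ₁). -/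

import Mathlib

set_option synthInstance.maxHeartbeats 1000000
set_option maxHeartbeats 1000000

noncomputable section

/-- The Laurent polynomial ring `A = ℝ[σ₁^{±1},…,σₙ^{±1}]` in `n` indeterminates,
realized as the group algebra of `ℤⁿ` over `ℝ`. -/
abbrev LP (n : ℕ) : Type := AddMonoidAlgebra ℝ (Fin n → ℤ)

/-- The monomial `σ^ν` for `ν ∈ ℤⁿ`. -/
def mono {n : ℕ} (ν : Fin n → ℤ) : LP n := AddMonoidAlgebra.single ν 1

/-- The Laurent polynomial subring `A_d = ℝ[σ₁^{±1},…,σ_d^{±1}]` in the first `d`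
indeterminates, as a subalgebra of `A`: it is generated by the monomials `σ^ν`
with `ν` supported on the first `d` coordinates. -/
def subA (n d : ℕ) : Subalgebra ℝ (LP n) :=
  Algebra.adjoin ℝ {x | ∃ ν : Fin n → ℤ, (∀ i : Fin n, d ≤ (i : ℕ) → ν i = 0) ∧ x = mono ν}

/-- The index of the variable `σ_{d+j}` for `1 ≤ j ≤ n-d` (0-indexed: `j : Fin (n-d)`). -/
def embIdx {n : ℕ} (d : ℕ) (j : Fin (n - d)) : Fin n :=
  ⟨d + (j : ℕ), by have := j.isLt; omega⟩

/-- The variable `σ_{d+j}` as an element of `A`. -/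
def sigmaVar {n : ℕ} (d : ℕ) (j : Fin (n - d)) : LP n := mono (Pi.single (embIdx d j) 1)

/-- The action of a Laurent polynomial `f ∈ A` on a scalar trajectory `w : ℤⁿ → ℝ`:
`(σ^{ν'} w)(ν) = w(ν + ν')`, extended `ℝ`-linearly. -/
def actS {n : ℕ} (f : LP n) (w : (Fin n → ℤ) → ℝ) : (Fin n → ℤ) → ℝ :=
  fun ν => Finsupp.sum f.coeff fun μ c => c * w (ν + μ)

/-- The action of a row vector `r ∈ A^q` on a vector trajectory `w : ℤⁿ → ℝ^q`:
`r·w = Σᵢ rᵢ·wᵢ`. -/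
def actRow {n q : ℕ} (r : Fin q → LP n) (w : (Fin n → ℤ) → Fin q → ℝ) : (Fin n → ℤ) → ℝ :=
  fun ν => ∑ j, actS (r j) (fun μ => w μ j) ν

/-- The componentwise action of a matrix `P ∈ A^{a×b}` on a trajectory `w : ℤⁿ → ℝ^b`. -/
def actMat {n a b : ℕ} (P : Matrix (Fin a) (Fin b) (LP n)) (w : (Fin n → ℤ) → Fin b → ℝ) :
    (Fin n → ℤ) → Fin a → ℝ :=
  fun ν i => actRow (P i) w ν

/-- The behavior of a submodule `R ⊆ A^q`:
`B(R) = {w : ℤⁿ → ℝ^q | r·w = 0 for all r ∈ R}`. -/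
def Behavior {n q : ℕ} (R : Submodule (LP n) (Fin q → LP n)) :
    Set ((Fin n → ℤ) → Fin q → ℝ) :=
  {w | ∀ r ∈ R, actRow r w = 0}

/-- A matrix `T ∈ ℤ^{n×n}` is ℤ-unimodular if `det T = ±1`. -/
def Unimodular {n : ℕ} (T : Matrix (Fin n) (Fin n) ℤ) : Prop := T.det = 1 ∨ T.det = -1

/-- The `ℝ`-algebra endomorphism `φ_T : A → A` induced by `T ∈ ℤ^{n×n}`,
determined by `φ_T(σ^ν) = σ^{Tν}`. -/
def phiT {n : ℕ} (T : Matrix (Fin n) (Fin n) ℤ) : LP n →ₐ[ℝ] LP n :=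
  AddMonoidAlgebra.mapDomainAlgHom ℝ ℝ T.mulVecLin.toAddMonoidHom

/-- The image `φ̂_T(R)` of a submodule `R ⊆ A^q` under the componentwise extension
`φ̂_T : A^q → A^q` of `φ_T` (the span is taken only to record that it is a submodule;
for unimodular `T` the image is already a submodule). -/
def hatPhiT {n q : ℕ} (T : Matrix (Fin n) (Fin n) ℤ) (R : Submodule (LP n) (Fin q → LP n)) :
    Submodule (LP n) (Fin q → LP n) :=
  Submodule.span (LP n) ((fun r (i : Fin q) => phiT T (r i)) '' (R : Set (Fin q → LP n)))

/-- The annihilator ideal `ann(A^q/R) = {f ∈ A | f·v ∈ R for all v ∈ A^q}`. -/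
def annQ {n q : ℕ} (R : Submodule (LP n) (Fin q → LP n)) : Ideal (LP n) :=
  Submodule.colon R ⊤

/-- The monomial `σ₁^{ν₁}⋯σ_d^{ν_d}` (the part of `σ^ν` in the first `d` variables),
as an element of `A_d`. -/
def monoD (n d : ℕ) (ν : Fin n → ℤ) : subA n d :=
  ⟨mono (fun i => if (i : ℕ) < d then ν i else 0),
   Algebra.subset_adjoin
     ⟨fun i => if (i : ℕ) < d then ν i else 0, fun i hi => if_neg (by omega), rfl⟩⟩

/-!
Write `ψ r = Σ rᵢ gᵢ`. The companion relations say that right multiplication by `A_j` on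
`A_d^γ` corresponds under `ψ` to multiplication by `σ_{d+j}` on `M`. Pairs `(u, U)` related in
this way form a group, which therefore contains `(Π_j σ_{d+j}^{ν_{d+j}}, Π_j A_j^{ν_{d+j}})`.
Since `ψ (a C)` is the residue of `a` for every row `a`, `ψ` maps the vector of condition (2) to
`Σ_ν α_ν σ^ν = f mod R`; this gives (1) ⇔ (2), and (2) ⇔ (3) says that the rows of `X`
generate `ker ψ`.
-/

open Matrix

def intertwiners {R S M ι : Type*} [CommMonoid R] [MulAction R M] [Semiring S] [Fintype ι]
    [DecidableEq ι] (ψ : (ι → S) → M) : Subgroup (Rˣ × (Matrix ι ι S)ˣ) where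
  carrier := {p | ∀ r, ψ (r ᵥ* (p.2 : Matrix ι ι S)) = p.1 • ψ r}
  mul_mem' {p p'} hp hp' r := by
    rw [Prod.snd_mul, Units.val_mul, ← vecMul_vecMul, hp', hp, smul_smul, Prod.fst_mul, mul_comm]
  one_mem' r := by simp
  inv_mem' {p} hp r := by
    rw [Prod.fst_inv, Prod.snd_inv, eq_inv_smul_iff, ← hp, vecMul_vecMul, Units.inv_mul,
      vecMul_one]

lemma Subgroup.mk_prod_ofFn_mem {G K : Type*} [Group G] [Group K] (H : Subgroup (G × K)) {m : ℕ}
    {u : Fin m → G} {U : Fin m → K} (h : ∀ j, (u j, U j) ∈ H) :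
    ((List.ofFn u).prod, (List.ofFn U).prod) ∈ H := by
  have hprod : ((List.ofFn u).prod, (List.ofFn U).prod) = (List.ofFn fun j => (u j, U j)).prod :=
    Prod.ext (by simpa [List.map_ofFn, Function.comp_def] using
        ((MonoidHom.fst G K).map_list_prod (List.ofFn fun j => (u j, U j))).symm)
      (by simpa [List.map_ofFn, Function.comp_def] using
        ((MonoidHom.snd G K).map_list_prod (List.ofFn fun j => (u j, U j))).symm)
  rw [hprod]
  exact H.list_prod_mem (by simpa [List.mem_ofFn] using h)

lemma mem_intertwiners_linearCombination {R S M ι : Type*} [CommSemiring R] [Semiring S]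
    [AddCommMonoid M] [Module R M] [Module S M] [SMulCommClass S R M] [Fintype ι] [DecidableEq ι]
    (g : ι → M) {u : Rˣ} {U : (Matrix ι ι S)ˣ}
    (h : ∀ i, (u : R) • g i = Fintype.linearCombination S g ((U : Matrix ι ι S) i)) :
    (u, U) ∈ intertwiners (Fintype.linearCombination S g) := by
  intro r
  simp only [vecMul_eq_sum, map_sum, map_smul, ← h, Fintype.linearCombination_apply,
    Finset.smul_sum, Units.smul_def]
  exact Finset.sum_congr rfl fun i _ => smul_comm _ _ _

lemma mono_add {n : ℕ} (a b : Fin n → ℤ) : mono (a + b) = mono a * mono b := by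
  simp [mono, AddMonoidAlgebra.single_mul_single]

def monoUnit (n : ℕ) : Multiplicative (Fin n → ℤ) →* (LP n)ˣ :=
  (Units.map (AddMonoidAlgebra.of ℝ (Fin n → ℤ))).comp toUnits.toMonoidHom

lemma coe_monoUnit_ofAdd {n : ℕ} (ν : Fin n → ℤ) :
    (monoUnit n (.ofAdd ν) : LP n) = mono ν := rfl

lemma embIdx_injective {n : ℕ} (d : ℕ) : Function.Injective (embIdx (n := n) d) :=
  fun j k h => Fin.ext (by simpa [embIdx] using congrArg Fin.val h)

lemma head_add_tail {n : ℕ} (d : ℕ) (ν : Fin n → ℤ) :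
    ((fun i : Fin n => if (i : ℕ) < d then ν i else 0) +
      ∑ j : Fin (n - d), ν (embIdx d j) • Pi.single (embIdx d j) 1) = ν := by
  funext i
  simp only [Pi.add_apply, Finset.sum_apply, Pi.smul_apply, Pi.single_apply, smul_eq_mul,
    mul_ite, mul_one, mul_zero]
  by_cases hi : (i : ℕ) < d
  · refine (add_eq_left.2 (Finset.sum_eq_zero fun j _ => if_neg ?_)).trans (if_pos hi)
    rintro rfl
    simp [embIdx] at hi
  · obtain ⟨j, rfl⟩ : ∃ j, embIdx d j = i :=
      ⟨⟨i - d, by omega⟩, Fin.ext (by simp only [embIdx]; omega)⟩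
    simp [hi, (embIdx_injective d).eq_iff]

lemma monoD_mul_prod_zpow {n : ℕ} (d : ℕ) (ν : Fin n → ℤ) :
    (monoD n d ν : LP n) *
      ((∏ j : Fin (n - d), monoUnit n (.ofAdd (Pi.single (embIdx d j) 1)) ^ ν (embIdx d j) :
        (LP n)ˣ) : LP n) = mono ν := by
  simp_rw [← map_zpow, ← ofAdd_zsmul, ← map_prod, ← ofAdd_sum, coe_monoUnit_ofAdd]
  rw [show (monoD n d ν : LP n) = mono _ from rfl, ← mono_add, head_add_tail]

lemma companion_prod_mem_intertwiners {n d γ : ℕ} {M : Type*} [AddCommGroup M] [Module (LP n) M]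
    (g : Fin γ → M) (A : Fin (n - d) → (Matrix (Fin γ) (Fin γ) (subA n d))ˣ)
    (hA : ∀ j i, sigmaVar d j • g i = ∑ k, ((A j : Matrix (Fin γ) (Fin γ) (subA n d)) i k) • g k)
    (ν : Fin n → ℤ) :
    (∏ j : Fin (n - d), monoUnit n (.ofAdd (Pi.single (embIdx d j) 1)) ^ ν (embIdx d j),
      (List.ofFn fun j => A j ^ ν (embIdx d j)).prod) ∈
      intertwiners (Fintype.linearCombination (subA n d) g) := by
  rw [← List.prod_ofFn]
  exact Subgroup.mk_prod_ofFn_mem _ fun j =>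
    zpow_mem (mem_intertwiners_linearCombination (u := monoUnit n _) g (hA j)) _

lemma linearCombination_vecMul {R S M ι κ : Type*} [CommSemiring R] [CommSemiring S] [Algebra S R]
    [AddCommMonoid M] [Module R M] [Module S M] [IsScalarTower S R M] [Fintype ι] [Fintype κ]
    [DecidableEq κ] (g : ι → M) (φ : (κ → R) →ₗ[R] M) (C : Matrix κ ι S)
    (hC : ∀ k, Fintype.linearCombination S g (C k) = φ (Pi.single k 1)) (a : κ → S) :
    Fintype.linearCombination S g (a ᵥ* C) = φ (fun k => algebraMap S R (a k)) := by
  conv_rhs => rw [← Finset.univ_sum_single (fun k => algebraMap S R (a k))]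
  simp only [vecMul_eq_sum, map_sum, map_smul, hC]
  refine Finset.sum_congr rfl fun k _ => ?_
  rw [← algebraMap_smul R (a k), ← map_smul, ← Pi.single_smul, smul_eq_mul, mul_one]

section Membership

variable {n d q γ : ℕ}

/-- The row vector of conditions (2) and (3). -/
def membershipVector (C : Matrix (Fin q) (Fin γ) (subA n d))
    (A : Fin (n - d) → (Matrix (Fin γ) (Fin γ) (subA n d))ˣ) (α : (Fin n → ℤ) →₀ (Fin q → ℝ)) :
    Fin γ → subA n d :=
  ∑ ν ∈ α.support, monoD n d ν •
    vecMul (fun j => algebraMap ℝ (subA n d) (α ν j))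
      (C * (((List.ofFn fun j => A j ^ ν (embIdx d j)).prod :
        (Matrix (Fin γ) (Fin γ) (subA n d))ˣ) : Matrix (Fin γ) (Fin γ) (subA n d)))

lemma linearCombination_membershipVector (R : Submodule (LP n) (Fin q → LP n))
    (g : Fin γ → (Fin q → LP n) ⧸ R) (A : Fin (n - d) → (Matrix (Fin γ) (Fin γ) (subA n d))ˣ)
    (hA : ∀ j i, sigmaVar d j • g i = ∑ k, ((A j : Matrix (Fin γ) (Fin γ) (subA n d)) i k) • g k)
    (C : Matrix (Fin q) (Fin γ) (subA n d))
    (hC : ∀ i, ∑ k, C i k • g k = Submodule.Quotient.mk (Pi.single i 1 : Fin q → LP n))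
    (f : Fin q → LP n) (α : (Fin n → ℤ) →₀ (Fin q → ℝ))
    (hf : ∀ j, f j = ∑ ν ∈ α.support, AddMonoidAlgebra.single ν (α ν j)) :
    Fintype.linearCombination (subA n d) g (membershipVector C A α) =
      Submodule.Quotient.mk f := by
  rw [membershipVector, map_sum]
  trans ∑ ν ∈ α.support, R.mkQ (mono ν • fun j => algebraMap ℝ (LP n) (α ν j))
  · refine Finset.sum_congr rfl fun ν _ => ?_
    rw [map_smul, ← vecMul_vecMul, companion_prod_mem_intertwiners g A hA ν,
      linearCombination_vecMul g R.mkQ C hC, Units.smul_def, Subalgebra.smul_def, smul_smul,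
      monoD_mul_prod_zpow, map_smul]
    rfl
  · rw [← map_sum]
    exact congrArg R.mkQ (funext fun j => by simp [hf j, mono, AddMonoidAlgebra.single_mul_single])

end Membership

theorem stmt4_general (n d q γ δ : ℕ) (R : Submodule (LP n) (Fin q → LP n))
    (g : Fin γ → (Fin q → LP n) ⧸ R)
    (X : Matrix (Fin δ) (Fin γ) (subA n d))
    (hX : ∀ r : Fin γ → subA n d,
      (∑ i, r i • g i) = 0 ↔ r ∈ Submodule.span (subA n d) (Set.range fun i : Fin δ => X i))
    (A : Fin (n - d) → (Matrix (Fin γ) (Fin γ) (subA n d))ˣ)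
    (hA : ∀ j : Fin (n - d), ∀ i : Fin γ,
      sigmaVar d j • g i = ∑ k, ((A j : Matrix (Fin γ) (Fin γ) (subA n d)) i k) • g k)
    (C : Matrix (Fin q) (Fin γ) (subA n d))
    (hC : ∀ i : Fin q, (∑ k, C i k • g k) =
      Submodule.Quotient.mk (Pi.single i 1 : Fin q → LP n))
    (f : Fin q → LP n) (α : (Fin n → ℤ) →₀ (Fin q → ℝ))
    (hf : ∀ j : Fin q, f j = ∑ ν ∈ α.support, AddMonoidAlgebra.single ν (α ν j)) :
    ((f ∈ R) ↔
      (∑ i, (∑ ν ∈ α.support, monoD n d ν •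
          Matrix.vecMul (fun j : Fin q => algebraMap ℝ (subA n d) (α ν j))
            (C * (((List.ofFn fun j => A j ^ ν (embIdx d j)).prod :
                (Matrix (Fin γ) (Fin γ) (subA n d))ˣ) :
              Matrix (Fin γ) (Fin γ) (subA n d)))) i • g i) = 0) ∧
    ((f ∈ R) ↔
      ∃ F : Fin δ → subA n d,
        (∑ ν ∈ α.support, monoD n d ν •
          Matrix.vecMul (fun j : Fin q => algebraMap ℝ (subA n d) (α ν j))
            (C * (((List.ofFn fun j => A j ^ ν (embIdx d j)).prod :
                (Matrix (Fin γ) (Fin γ) (subA n d))ˣ) :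
              Matrix (Fin γ) (Fin γ) (subA n d)))) = Matrix.vecMul F X) := by
  have hψ : ∑ i, membershipVector C A α i • g i = Submodule.Quotient.mk f :=
    linearCombination_membershipVector R g A hA C hC f α hf
  have hmem : f ∈ R ↔ ∑ i, membershipVector C A α i • g i = 0 := by
    rw [hψ, Submodule.Quotient.mk_eq_zero]
  refine ⟨hmem, hmem.trans ((hX _).trans ?_)⟩
  rw [show Set.range (fun i => X i) = Set.range X.row from rfl, ← range_vecMulLinear]
  exact exists_congr fun F => eq_comm

/-- Membership test for the equation module via the matrices
`X(σ₁)`, `A_j(σ₁)`, `C(σ₁)`. -/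
theorem stmt4 (n d q γ δ : ℕ) (R : Submodule (LP n) (Fin q → LP n))
    (hfg : Module.Finite (subA n d) ((Fin q → LP n) ⧸ R))
    (g : Fin γ → (Fin q → LP n) ⧸ R)
    (hgen : Submodule.span (subA n d) (Set.range g) = ⊤)
    (X : Matrix (Fin δ) (Fin γ) (subA n d))
    (hX : ∀ r : Fin γ → subA n d,
      (∑ i, r i • g i) = 0 ↔ r ∈ Submodule.span (subA n d) (Set.range fun i : Fin δ => X i))
    (A : Fin (n - d) → (Matrix (Fin γ) (Fin γ) (subA n d))ˣ)
    (hA : ∀ j : Fin (n - d), ∀ i : Fin γ,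
      sigmaVar d j • g i = ∑ k, ((A j : Matrix (Fin γ) (Fin γ) (subA n d)) i k) • g k)
    (C : Matrix (Fin q) (Fin γ) (subA n d))
    (hC : ∀ i : Fin q, (∑ k, C i k • g k) =
      Submodule.Quotient.mk (Pi.single i 1 : Fin q → LP n))
    (f : Fin q → LP n) (α : (Fin n → ℤ) →₀ (Fin q → ℝ))
    (hf : ∀ j : Fin q, f j = ∑ ν ∈ α.support, AddMonoidAlgebra.single ν (α ν j)) :
    ((f ∈ R) ↔
      (∑ i, (∑ ν ∈ α.support, monoD n d ν •
          Matrix.vecMul (fun j : Fin q => algebraMap ℝ (subA n d) (α ν j))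
            (C * (((List.ofFn fun j => A j ^ ν (embIdx d j)).prod :
                (Matrix (Fin γ) (Fin γ) (subA n d))ˣ) :
              Matrix (Fin γ) (Fin γ) (subA n d)))) i • g i) = 0) ∧
    ((f ∈ R) ↔
      ∃ F : Fin δ → subA n d,
        (∑ ν ∈ α.support, monoD n d ν •
          Matrix.vecMul (fun j : Fin q => algebraMap ℝ (subA n d) (α ν j))
            (C * (((List.ofFn fun j => A j ^ ν (embIdx d j)).prod :
                (Matrix (Fin γ) (Fin γ) (subA n d))ˣ) :
              Matrix (Fin γ) (Fin γ) (subA n d)))) = Matrix.vecMul F X) :=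
  stmt4_general n d q γ δ R g X hX A hA C hC f α hf
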